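/- arXiv:2411.01692 — 3 statements merged into one kernel-verified Lean document; each statement's English description precedes it below -/
import Mathlib

section
/- For the controlled Chaplygin sleigh with dynamics m·ẍ = u·sin θ, m·ÿ = -u·cos θ, I·θ̈ = 0, if the feedback control u*(t) = -m·θ̇·(ẋ·cos θ + ẏ·sin θ) - m·(ẋ·sin θ - ẏ·cos θ) is applied, then the constraint function μ̂(t) = ẋ·sin θ - ẏ·cos θ satisfies μ̂(t) = μ̂(0)·e^{-t}, i.e., it converges exponentially to zero. -/
theorem sleigh_exp_stabilization
    (m I : ℝ) (hm : 0 < m) (hI : 0 < I)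
    (x y θ : ℝ → ℝ)
    (hx : ContDiff ℝ (⊤ : ℕ∞) x) (hy : ContDiff ℝ (⊤ : ℕ∞) y) (hθ : ContDiff ℝ (⊤ : ℕ∞) θ)
    (u : ℝ → ℝ)
    (hu : ∀ t, u t = -m * deriv θ t * (deriv x t * Real.cos (θ t) + deriv y t * Real.sin (θ t))
      - m * (deriv x t * Real.sin (θ t) - deriv y t * Real.cos (θ t)))
    (hdx : ∀ t, m * deriv (deriv x) t = u t * Real.sin (θ t))
    (hdy : ∀ t, m * deriv (deriv y) t = -(u t) * Real.cos (θ t))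
    (hdθ : ∀ t, I * deriv (deriv θ) t = 0) :
    ∀ t, deriv x t * Real.sin (θ t) - deriv y t * Real.cos (θ t)
      = (deriv x 0 * Real.sin (θ 0) - deriv y 0 * Real.cos (θ 0)) * Real.exp (-t) := by
  set μ : ℝ → ℝ := fun t => deriv x t * Real.sin (θ t) - deriv y t * Real.cos (θ t) with hμ
  have hdx' : Differentiable ℝ (deriv x) := ((contDiff_infty_iff_deriv.mp (hx.of_le (by simp))).2).differentiable (by norm_num)
  have hdy' : Differentiable ℝ (deriv y) := ((contDiff_infty_iff_deriv.mp (hy.of_le (by simp))).2).differentiable (by norm_num)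
  have hθ' : Differentiable ℝ θ := hθ.differentiable (by norm_num)
  -- μ has derivative -μ
  have key : ∀ t, HasDerivAt μ (-(μ t)) t := by
    intro t
    have h1 : HasDerivAt (deriv x) (deriv (deriv x) t) t := (hdx' t).hasDerivAt
    have h2 : HasDerivAt (deriv y) (deriv (deriv y) t) t := (hdy' t).hasDerivAt
    have hθt : HasDerivAt θ (deriv θ t) t := (hθ' t).hasDerivAt
    have hs : HasDerivAt (fun s => Real.sin (θ s)) (Real.cos (θ t) * deriv θ t) t :=
      (Real.hasDerivAt_sin (θ t)).comp t hθt
    have hc : HasDerivAt (fun s => Real.cos (θ s)) (-Real.sin (θ t) * deriv θ t) t :=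
      (Real.hasDerivAt_cos (θ t)).comp t hθt
    have hμd : HasDerivAt μ
        (deriv (deriv x) t * Real.sin (θ t) + deriv x t * (Real.cos (θ t) * deriv θ t)
        - (deriv (deriv y) t * Real.cos (θ t) + deriv y t * (-Real.sin (θ t) * deriv θ t))) t :=
      (h1.mul hs).sub (h2.mul hc)
    convert hμd using 1
    have hs2 : Real.sin (θ t) ^ 2 + Real.cos (θ t) ^ 2 = 1 := Real.sin_sq_add_cos_sq _
    apply mul_left_cancel₀ hm.ne'
    simp only [hμ]
    linear_combination -(Real.sin (θ t)) * hdx t + (Real.cos (θ t)) * hdy t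
      - (u t) * hs2 - hu t
  -- g t = μ t * exp t is constant
  have hg : ∀ t, μ t * Real.exp t = μ 0 * Real.exp 0 := by
    have hconst : ∀ t, HasDerivAt (fun s => μ s * Real.exp s) 0 t := by
      intro t
      have : HasDerivAt (fun s => μ s * Real.exp s) (-(μ t) * Real.exp t + μ t * Real.exp t) t :=
        ((key t).mul (Real.hasDerivAt_exp t))
      convert this using 1
      ring
    intro t
    have : (fun s => μ s * Real.exp s) = fun _ => μ 0 * Real.exp 0 := by
      apply funext
      have hdiff : ∀ s, HasDerivAt (fun s => μ s * Real.exp s) 0 s := hconst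
      intro s
      exact is_const_of_deriv_eq_zero (fun s => (hdiff s).differentiableAt)
        (fun s => (hdiff s).deriv) s 0
    exact congrFun this t
  intro t
  have h := hg t
  have : μ t = μ 0 * Real.exp (-t) := by
    rw [Real.exp_neg]
    field_simp at h ⊢
    simpa using h
  simpa [hμ] using this
end

section
/- For the controlled vertical rolling coin with feedback u₁ = -m·θ̇·φ̇·sin φ, u₂ = m·θ̇·φ̇·cos φ, if the initial conditions satisfy ẋ(0) = θ̇(0)·cos φ(0) and ẏ(0) = θ̇(0)·sin φ(0), then ẋ(t) = θ̇(t)·cos φ(t) and ẏ(t) = θ̇(t)·sin φ(t) for all t (the constraint distribution is invariant under the closed-loop flow). -/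
private lemma deriv_diff {f : ℝ → ℝ} (hf : ContDiff ℝ (⊤ : ℕ∞) f) : Differentiable ℝ (deriv f) := by
  have h2 : ContDiff ℝ ((1 : ℕ) + 1) f := hf.of_le (by exact WithTop.coe_le_coe.mpr (le_top : ((1 + 1 : ℕ) : ℕ∞) ≤ ⊤))
  exact ((contDiff_succ_iff_deriv.mp h2).2.2).differentiable (by simp)

theorem coin_constraint_invariance
    (m I J : ℝ) (hm : 0 < m) (hI : 0 < I) (hJ : 0 < J)
    (x y θ φ u₁ u₂ : ℝ → ℝ)
    (hx : ContDiff ℝ (⊤ : ℕ∞) x) (hy : ContDiff ℝ (⊤ : ℕ∞) y)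
    (hθ : ContDiff ℝ (⊤ : ℕ∞) θ) (hφ : ContDiff ℝ (⊤ : ℕ∞) φ)
    (hu₁ : ∀ t, u₁ t = -m * deriv θ t * deriv φ t * Real.sin (φ t))
    (hu₂ : ∀ t, u₂ t = m * deriv θ t * deriv φ t * Real.cos (φ t))
    (hdx : ∀ t, m * deriv (deriv x) t = u₁ t)
    (hdy : ∀ t, m * deriv (deriv y) t = u₂ t)
    (hdθ : ∀ t, I * deriv (deriv θ) t = -(u₁ t) * Real.cos (φ t) - u₂ t * Real.sin (φ t))
    (hdφ : ∀ t, J * deriv (deriv φ) t = u₁ t + u₂ t)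
    (h0x : deriv x 0 = deriv θ 0 * Real.cos (φ 0))
    (h0y : deriv y 0 = deriv θ 0 * Real.sin (φ 0)) :
    ∀ t, deriv x t = deriv θ t * Real.cos (φ t) ∧ deriv y t = deriv θ t * Real.sin (φ t) := by
  have hx' := deriv_diff hx
  have hy' := deriv_diff hy
  have hθ' := deriv_diff hθ
  -- θ̈ = 0
  have hθ'' : ∀ t, deriv (deriv θ) t = 0 := by
    intro t
    have h := hdθ t
    rw [hu₁ t, hu₂ t] at h
    have : I * deriv (deriv θ) t = 0 := by rw [h]; ring
    exact (mul_eq_zero.mp this).resolve_left hI.ne'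
  have hθdd : ∀ t, HasDerivAt (deriv θ) 0 t := by
    intro t
    have := (hθ' t).hasDerivAt
    rwa [hθ'' t] at this
  have hφd : ∀ t, HasDerivAt φ (deriv φ t) t :=
    fun t => (hφ.differentiable (by simp) t).hasDerivAt
  -- x part
  have keyx : ∀ t, deriv x t = deriv θ t * Real.cos (φ t) := by
    have hF : ∀ t, HasDerivAt (fun t => deriv x t - deriv θ t * Real.cos (φ t)) 0 t := by
      intro t
      have h1 : HasDerivAt (deriv x) (deriv (deriv x) t) t :=
        (hx' t).hasDerivAt
      have hddx : deriv (deriv x) t = -(deriv θ t) * deriv φ t * Real.sin (φ t) := by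
        have h := hdx t
        rw [hu₁ t] at h
        have h2 : m * deriv (deriv x) t = m * (-(deriv θ t) * deriv φ t * Real.sin (φ t)) := by
          rw [h]; ring
        exact mul_left_cancel₀ hm.ne' h2
      rw [hddx] at h1
      have h2 : HasDerivAt (fun t => Real.cos (φ t)) (-Real.sin (φ t) * deriv φ t) t :=
        (Real.hasDerivAt_cos (φ t)).comp t (hφd t)
      have h3 := (hθdd t).fun_mul h2
      have := h1.fun_sub h3
      exact this.congr_deriv (by ring)
    have hconst := is_const_of_deriv_eq_zero
      (fun t => (hF t).differentiableAt) (fun t => (hF t).deriv)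
    intro t
    have := hconst t 0
    simp only [h0x] at this
    linarith
  have keyy : ∀ t, deriv y t = deriv θ t * Real.sin (φ t) := by
    have hF : ∀ t, HasDerivAt (fun t => deriv y t - deriv θ t * Real.sin (φ t)) 0 t := by
      intro t
      have h1 : HasDerivAt (deriv y) (deriv (deriv y) t) t :=
        (hy' t).hasDerivAt
      have hddy : deriv (deriv y) t = deriv θ t * deriv φ t * Real.cos (φ t) := by
        have h := hdy t
        rw [hu₂ t] at h
        have h2 : m * deriv (deriv y) t = m * (deriv θ t * deriv φ t * Real.cos (φ t)) := by
          rw [h]; ring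
        exact mul_left_cancel₀ hm.ne' h2
      rw [hddy] at h1
      have h2 : HasDerivAt (fun t => Real.sin (φ t)) (Real.cos (φ t) * deriv φ t) t :=
        (Real.hasDerivAt_sin (φ t)).comp t (hφd t)
      have h3 := (hθdd t).fun_mul h2
      have := h1.fun_sub h3
      exact this.congr_deriv (by ring)
    have hconst := is_const_of_deriv_eq_zero
      (fun t => (hF t).differentiableAt) (fun t => (hF t).deriv)
    intro t
    have := hconst t 0
    simp only [h0y] at this
    linarith
  exact fun t => ⟨keyx t, keyy t⟩
end

section
/- For the controlled vertical rolling coin, under the stabilizing feedback (u₁*, u₂*) = C(φ)⁻¹·(c₁, c₂) with c₁ = -ẋ + θ̇·cos φ - φ̇·θ̇·sin φ and c₂ = -ẏ + θ̇·sin φ + φ̇·θ̇·cos φ, where C(φ) is the matrix [[1/m + cos²φ/I, cos φ·sin φ/I],[cos φ·sin φ/I, 1/m + sin²φ/I]], the constraint functions μ̂₁ = ẋ - θ̇·cos φ and μ̂₂ = ẏ - θ̇·sin φ satisfy μ̂_b(t) = μ̂_b(0)·e^{-t} for b = 1, 2. -/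
noncomputable def coinC (m I φ : ℝ) : Matrix (Fin 2) (Fin 2) ℝ :=
  !![1 / m + Real.cos φ ^ 2 / I, Real.cos φ * Real.sin φ / I;
     Real.cos φ * Real.sin φ / I, 1 / m + Real.sin φ ^ 2 / I]

private lemma decay_aux (f : ℝ → ℝ) (hf : ∀ t, HasDerivAt f (-(f t)) t) :
    ∀ t, f t = f 0 * Real.exp (-t) := by
  have hg : ∀ t, HasDerivAt (fun s => f s * Real.exp s) 0 t := by
    intro t
    have h := (hf t).mul (Real.hasDerivAt_exp t)
    have e : -(f t) * Real.exp t + f t * Real.exp t = 0 := by ring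
    rwa [e] at h
  have hc : ∀ s t : ℝ, f s * Real.exp s = f t * Real.exp t :=
    is_const_of_deriv_eq_zero (fun t => (hg t).differentiableAt)
      (fun t => (hg t).deriv)
  intro t
  have h0 := hc t 0
  simp only [Real.exp_zero, mul_one] at h0
  have : f t * Real.exp t * Real.exp (-t) = f 0 * Real.exp (-t) := by rw [h0]
  rwa [mul_assoc, ← Real.exp_add, add_neg_cancel, Real.exp_zero, mul_one] at this

theorem coin_exp_stabilization
    (m I J : ℝ) (hm : 0 < m) (hI : 0 < I) (hJ : 0 < J)
    (x y θ φ u₁ u₂ : ℝ → ℝ)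
    (hx : ContDiff ℝ (⊤ : ℕ∞) x) (hy : ContDiff ℝ (⊤ : ℕ∞) y)
    (hθ : ContDiff ℝ (⊤ : ℕ∞) θ) (hφ : ContDiff ℝ (⊤ : ℕ∞) φ)
    (hu : ∀ t, ![u₁ t, u₂ t] = (coinC m I (φ t))⁻¹.mulVec
      ![-(deriv x t) + deriv θ t * Real.cos (φ t) - deriv φ t * deriv θ t * Real.sin (φ t),
        -(deriv y t) + deriv θ t * Real.sin (φ t) + deriv φ t * deriv θ t * Real.cos (φ t)])
    (hdx : ∀ t, m * deriv (deriv x) t = u₁ t)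
    (hdy : ∀ t, m * deriv (deriv y) t = u₂ t)
    (hdθ : ∀ t, I * deriv (deriv θ) t = -(u₁ t) * Real.cos (φ t) - u₂ t * Real.sin (φ t))
    (hdφ : ∀ t, J * deriv (deriv φ) t = u₁ t + u₂ t) :
    ∀ t, (deriv x t - deriv θ t * Real.cos (φ t)
            = (deriv x 0 - deriv θ 0 * Real.cos (φ 0)) * Real.exp (-t)) ∧
         (deriv y t - deriv θ t * Real.sin (φ t)
            = (deriv y 0 - deriv θ 0 * Real.sin (φ 0)) * Real.exp (-t)) := by
  have hm' := hm.ne'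
  have hI' := hI.ne'
  -- invertibility of coinC and the scalar equations
  have hCu : ∀ t,
      (1 / m + Real.cos (φ t) ^ 2 / I) * u₁ t
        + Real.cos (φ t) * Real.sin (φ t) / I * u₂ t
        = -(deriv x t) + deriv θ t * Real.cos (φ t)
            - deriv φ t * deriv θ t * Real.sin (φ t) ∧
      Real.cos (φ t) * Real.sin (φ t) / I * u₁ t
        + (1 / m + Real.sin (φ t) ^ 2 / I) * u₂ t
        = -(deriv y t) + deriv θ t * Real.sin (φ t)
            + deriv φ t * deriv θ t * Real.cos (φ t) := by
    intro t
    have hdet : IsUnit (coinC m I (φ t)).det := by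
      have hsc := Real.sin_sq_add_cos_sq (φ t)
      have : (coinC m I (φ t)).det = 1 / m ^ 2 + 1 / (m * I) := by
        simp only [coinC, Matrix.det_fin_two_of]
        linear_combination (1/(m*I)) * hsc
      rw [this]
      have : (0:ℝ) < 1 / m ^ 2 + 1 / (m * I) := by positivity
      exact (isUnit_iff_ne_zero).2 this.ne'
    have h := hu t
    have h2 : (coinC m I (φ t)).mulVec ![u₁ t, u₂ t]
        = ![-(deriv x t) + deriv θ t * Real.cos (φ t) - deriv φ t * deriv θ t * Real.sin (φ t),
            -(deriv y t) + deriv θ t * Real.sin (φ t) + deriv φ t * deriv θ t * Real.cos (φ t)] := by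
      rw [h, Matrix.mulVec_mulVec, Matrix.mul_nonsing_inv _ hdet, Matrix.one_mulVec]
    constructor
    · have := congrFun h2 0
      simpa [coinC, Matrix.mulVec, dotProduct, Fin.sum_univ_two] using this
    · have := congrFun h2 1
      simpa [coinC, Matrix.mulVec, dotProduct, Fin.sum_univ_two] using this
  -- differentiability facts
  have hdx' : Differentiable ℝ (deriv x) := ((contDiff_infty_iff_deriv.mp (hx.of_le (by simp))).2).differentiable (by simp)
  have hdy' : Differentiable ℝ (deriv y) := ((contDiff_infty_iff_deriv.mp (hy.of_le (by simp))).2).differentiable (by simp)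
  have hdθ' : Differentiable ℝ (deriv θ) := ((contDiff_infty_iff_deriv.mp (hθ.of_le (by simp))).2).differentiable (by simp)
  have hφ' : Differentiable ℝ φ := hφ.differentiable (by simp)
  have key1 : ∀ t, HasDerivAt (fun s => deriv x s - deriv θ s * Real.cos (φ s))
      (-(deriv x t - deriv θ t * Real.cos (φ t))) t := by
    intro t
    have hc : HasDerivAt (fun s => Real.cos (φ s)) (-Real.sin (φ t) * deriv φ t) t :=
      (Real.hasDerivAt_cos (φ t)).comp t (hφ' t).hasDerivAt
    have h := ((hdx' t).hasDerivAt).sub (((hdθ' t).hasDerivAt).mul hc)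
    have e : deriv (deriv x) t - (deriv (deriv θ) t * Real.cos (φ t)
        + deriv θ t * (-Real.sin (φ t) * deriv φ t))
        = -(deriv x t - deriv θ t * Real.cos (φ t)) := by
      have e1 : deriv (deriv x) t = u₁ t / m := by
        field_simp [eq_div_iff hm']; linarith [hdx t]
      have e2 : deriv (deriv θ) t = (-(u₁ t) * Real.cos (φ t) - u₂ t * Real.sin (φ t)) / I := by
        field_simp [eq_div_iff hI']; linarith [hdθ t]
      rw [e1, e2]
      have hq := (hCu t).1
      linear_combination hq
    rwa [e] at h
  have key2 : ∀ t, HasDerivAt (fun s => deriv y s - deriv θ s * Real.sin (φ s))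
      (-(deriv y t - deriv θ t * Real.sin (φ t))) t := by
    intro t
    have hc : HasDerivAt (fun s => Real.sin (φ s)) (Real.cos (φ t) * deriv φ t) t :=
      (Real.hasDerivAt_sin (φ t)).comp t (hφ' t).hasDerivAt
    have h := ((hdy' t).hasDerivAt).sub (((hdθ' t).hasDerivAt).mul hc)
    have e : deriv (deriv y) t - (deriv (deriv θ) t * Real.sin (φ t)
        + deriv θ t * (Real.cos (φ t) * deriv φ t))
        = -(deriv y t - deriv θ t * Real.sin (φ t)) := by
      have e1 : deriv (deriv y) t = u₂ t / m := by
        field_simp [eq_div_iff hm']; linarith [hdy t]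
      have e2 : deriv (deriv θ) t = (-(u₁ t) * Real.cos (φ t) - u₂ t * Real.sin (φ t)) / I := by
        field_simp [eq_div_iff hI']; linarith [hdθ t]
      rw [e1, e2]
      have hq := (hCu t).2
      linear_combination hq
    rwa [e] at h
  intro t
  exact ⟨decay_aux _ key1 t, decay_aux _ key2 t⟩
end
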